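/- For any permutation A of {1,...,n} with SUS(A) ≤ 2, the buffer sequence M(A) uniquely determines A: at each stage i, either M_i > M_{i-1} and A_i = max(A_1,...,A_{i-1}) + (M_i - M_{i-1}), or M_i ≤ M_{i-1} and A_i is the smallest positive integer not among A_1,...,A_{i-1}. -/

import Mathlib

/-- The set of values appearing in the first `i` entries of `A` (indices `1..i`). -/
def prefSet (A : ℕ → ℕ) (i : ℕ) : Finset ℕ := (Finset.Icc 1 i).image A

/-- `H_i`: the maximum value among the first `i` entries (0 for `i = 0`). -/
def hi (A : ℕ → ℕ) (i : ℕ) : ℕ := (prefSet A i).sup id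

/-- `ACK_i`: the least positive integer not among the first `i` entries. -/
noncomputable def ackSeq (A : ℕ → ℕ) (i : ℕ) : ℕ := sInf {k | 0 < k ∧ k ∉ prefSet A i}

/-- The buffer size `M_i = H_i - (ACK_i - 1)`. -/
noncomputable def buf (A : ℕ → ℕ) (i : ℕ) : ℤ := (hi A i : ℤ) - ackSeq A i + 1

/-- `A` restricted to `{1,...,n}` is a permutation of `{1,...,n}`. -/
def IsPermOn (A : ℕ → ℕ) (n : ℕ) : Prop := Set.BijOn A (Set.Icc 1 n) (Set.Icc 1 n)

/-- The positions `1..n` can be partitioned into `k` classes, each of which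
induces a strictly increasing subsequence of `A`. -/
def SUSle (A : ℕ → ℕ) (n k : ℕ) : Prop :=
  ∃ c : ℕ → ℕ, (∀ i ∈ Finset.Icc 1 n, c i < k) ∧
    ∀ i j, i ∈ Finset.Icc 1 n → j ∈ Finset.Icc 1 n → i < j → c i = c j → A i < A j

/-- `SUS(A)`: minimum number of increasing subsequences partitioning `A₁,…,Aₙ`. -/
noncomputable def sus (A : ℕ → ℕ) (n : ℕ) : ℕ := sInf {k | SUSle A n k}

/-- `LDS(A)`: maximum length of a strictly decreasing subsequence of `A₁,…,Aₙ`. -/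
noncomputable def lds (A : ℕ → ℕ) (n : ℕ) : ℕ :=
  sSup {m | ∃ s : Fin m → ℕ, StrictMono s ∧ (∀ t, s t ∈ Finset.Icc 1 n) ∧
    ∀ t u : Fin m, t < u → A (s u) < A (s t)}

/-!
Let `a = A_i`, `H = max(A_1,…,A_{i-1})` and `K = ACK_{i-1}`; since `a` is new, `K ≤ a`.
If `a = K`, the least missing value strictly increases while the maximum grows by at most one
(as `K ≤ H + 1`), so the buffer does not grow. If `a > K`, then `a > H`: otherwise `H`, `a`
and `K` (which must appear after position `i`) would form a decreasing subsequence of length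
three, impossible in a union of two increasing subsequences. Then the least missing value is
unchanged and the maximum jumps from `H` to `a`, so the buffer grows by exactly `a - H`.
-/

def Avoids321 (A : ℕ → ℕ) (n : ℕ) : Prop :=
  ∀ p q r, 1 ≤ p → p < q → q < r → r ≤ n → ¬(A r < A q ∧ A q < A p)

section SUS

variable {A : ℕ → ℕ} {n k : ℕ}

theorem susle_sus (A : ℕ → ℕ) (n : ℕ) : SUSle A n (sus A n) := by
  have hid : SUSle A n (n + 1) :=
    ⟨id, fun _ hmem => Nat.lt_succ_of_le (Finset.mem_Icc.1 hmem).2,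
      fun _ _ _ _ hij hid => absurd hid hij.ne⟩
  exact Nat.sInf_mem (s := {k | SUSle A n k}) ⟨n + 1, hid⟩

theorem SUSle.avoids321 (h : SUSle A n k) (hk : k ≤ 2) : Avoids321 A n := by
  obtain ⟨c, hc, hinc⟩ := h
  intro p q r hp hpq hqr hrn ⟨hrq, hqp⟩
  have hpI : p ∈ Finset.Icc 1 n := Finset.mem_Icc.2 ⟨hp, by omega⟩
  have hqI : q ∈ Finset.Icc 1 n := Finset.mem_Icc.2 ⟨by omega, by omega⟩
  have hrI : r ∈ Finset.Icc 1 n := Finset.mem_Icc.2 ⟨by omega, hrn⟩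
  have hcp := hc p hpI
  have hcq := hc q hqI
  have hcr := hc r hrI
  rcases (by omega : c p = c q ∨ c p = c r ∨ c q = c r) with h | h | h
  · exact absurd (hinc p q hpI hqI hpq h) (by omega)
  · exact absurd (hinc p r hpI hrI (hpq.trans hqr) h) (by omega)
  · exact absurd (hinc q r hqI hrI hqr h) (by omega)

end SUS

section Prefix

variable {A : ℕ → ℕ} {i x : ℕ}

theorem mem_prefSet : x ∈ prefSet A i ↔ ∃ j ∈ Finset.Icc 1 i, A j = x :=
  Finset.mem_image

theorem prefSet_succ (A : ℕ → ℕ) (i : ℕ) :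
    prefSet A (i + 1) = insert (A (i + 1)) (prefSet A i) := by
  rw [prefSet, prefSet, ← Finset.image_insert, Finset.insert_Icc_right_eq_Icc_add_one (by omega)]

theorem le_hi (h : x ∈ prefSet A i) : x ≤ hi A i :=
  Finset.le_sup (f := id) h

theorem hi_mem_prefSet (h : 0 < hi A i) : hi A i ∈ prefSet A i := by
  have hne : (prefSet A i).Nonempty :=
    Finset.nonempty_iff_ne_empty.2 fun he => by simp [hi, he] at h
  obtain ⟨x, hx, hxsup⟩ := Finset.exists_mem_eq_sup _ hne id
  rwa [hi, hxsup]

theorem hi_succ (A : ℕ → ℕ) (i : ℕ) : hi A (i + 1) = max (A (i + 1)) (hi A i) := by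
  rw [hi, prefSet_succ, Finset.sup_insert]
  rfl

theorem ackSeq_le (h0 : 0 < x) (h : x ∉ prefSet A i) : ackSeq A i ≤ x :=
  Nat.sInf_le ⟨h0, h⟩

theorem ackSeq_spec (A : ℕ → ℕ) (i : ℕ) : 0 < ackSeq A i ∧ ackSeq A i ∉ prefSet A i :=
  Nat.sInf_mem (s := {k | 0 < k ∧ k ∉ prefSet A i})
    ⟨hi A i + 1, Nat.succ_pos _, fun h => by have := le_hi h; omega⟩

theorem ackSeq_le_hi_add_one (A : ℕ → ℕ) (i : ℕ) : ackSeq A i ≤ hi A i + 1 :=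
  ackSeq_le (Nat.succ_pos _) fun h => by have := le_hi h; omega

theorem ackSeq_le_succ (A : ℕ → ℕ) (i : ℕ) : ackSeq A i ≤ ackSeq A (i + 1) :=
  ackSeq_le (ackSeq_spec A (i + 1)).1 fun h =>
    (ackSeq_spec A (i + 1)).2 (prefSet_succ A i ▸ Finset.mem_insert_of_mem h)

theorem ackSeq_lt_succ_of_eq (h : A (i + 1) = ackSeq A i) : ackSeq A i < ackSeq A (i + 1) := by
  refine (ackSeq_le_succ A i).lt_of_ne fun he => (ackSeq_spec A (i + 1)).2 ?_
  rw [prefSet_succ, ← he, ← h]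
  exact Finset.mem_insert_self _ _

theorem ackSeq_succ_of_ne (h : A (i + 1) ≠ ackSeq A i) : ackSeq A (i + 1) = ackSeq A i := by
  refine le_antisymm (ackSeq_le (ackSeq_spec A i).1 ?_) (ackSeq_le_succ A i)
  rw [prefSet_succ, Finset.mem_insert, not_or]
  exact ⟨Ne.symm h, (ackSeq_spec A i).2⟩

theorem buf_succ_le_of_eq (h : A (i + 1) = ackSeq A i) : buf A (i + 1) ≤ buf A i := by
  have hH := hi_succ A i
  have hK := ackSeq_lt_succ_of_eq h
  have hKH := ackSeq_le_hi_add_one A i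
  simp only [buf]
  omega

theorem buf_succ_sub_of_hi_lt (hne : A (i + 1) ≠ ackSeq A i) (hlt : hi A i < A (i + 1)) :
    buf A (i + 1) - buf A i = (A (i + 1) : ℤ) - hi A i := by
  rw [buf, buf, hi_succ, max_eq_left hlt.le, ackSeq_succ_of_ne hne]
  ring

end Prefix

section Permutation

variable {A : ℕ → ℕ} {n i : ℕ}

theorem IsPermOn.notMem_prefSet (hA : IsPermOn A n) (hin : i + 1 ≤ n) :
    A (i + 1) ∉ prefSet A i := by
  rw [mem_prefSet]
  rintro ⟨j, hj, hAj⟩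
  rw [Finset.mem_Icc] at hj
  have := hA.injOn ⟨hj.1, by omega⟩ ⟨by omega, hin⟩ hAj
  omega

theorem IsPermOn.ackSeq_le (hA : IsPermOn A n) (hin : i + 1 ≤ n) : ackSeq A i ≤ A (i + 1) :=
  _root_.ackSeq_le (hA.mapsTo ⟨by omega, hin⟩).1 (hA.notMem_prefSet hin)

theorem Avoids321.hi_lt_of_ackSeq_lt (h321 : Avoids321 A n) (hA : IsPermOn A n)
    (hin : i + 1 ≤ n) (hlt : ackSeq A i < A (i + 1)) : hi A i < A (i + 1) := by
  by_contra! hle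
  have hAn := (hA.mapsTo ⟨by omega, hin⟩).2
  obtain ⟨hK0, hKnew⟩ := ackSeq_spec A i
  have hH : hi A i ∈ prefSet A i := hi_mem_prefSet (by omega)
  obtain ⟨j, hj, hAj⟩ := mem_prefSet.1 hH
  rw [Finset.mem_Icc] at hj
  obtain ⟨r, ⟨hr1, hrn⟩, hAr⟩ := hA.surjOn ⟨hK0, by omega⟩
  have hir : i + 1 < r := by
    by_contra! hri
    rcases (by omega : r ≤ i ∨ r = i + 1) with hri | rfl
    · exact hKnew (mem_prefSet.2 ⟨r, Finset.mem_Icc.2 ⟨hr1, hri⟩, hAr⟩)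
    · omega
  have hne : A (i + 1) ≠ hi A i := fun h => hA.notMem_prefSet hin (h ▸ hH)
  exact h321 j (i + 1) r hj.1 (by omega) hir hrn ⟨by omega, by omega⟩

end Permutation

/-- for a permutation with `SUS ≤ 2`, at each stage either the buffer
grows and `A_i = max(A_1,…,A_{i-1}) + (M_i - M_{i-1})`, or it does not grow and
`A_i` is the least missing ID. -/
theorem buffer_determines_sus2 (n : ℕ) (A : ℕ → ℕ) (hA : IsPermOn A n)
    (hs : sus A n ≤ 2) :
    ∀ i ∈ Finset.Icc 1 n,
      (buf A (i - 1) < buf A i ∧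
        (A i : ℤ) = (hi A (i - 1) : ℤ) + (buf A i - buf A (i - 1))) ∨
      (buf A i ≤ buf A (i - 1) ∧ A i = ackSeq A (i - 1)) := by
  have h321 := (susle_sus A n).avoids321 hs
  intro i hmem
  rcases i with _ | j
  · simp at hmem
  have hin := (Finset.mem_Icc.1 hmem).2
  rw [Nat.add_sub_cancel]
  by_cases hK : A (j + 1) = ackSeq A j
  · exact Or.inr ⟨buf_succ_le_of_eq hK, hK⟩
  · have hlt := h321.hi_lt_of_ackSeq_lt hA hin ((hA.ackSeq_le hin).lt_of_ne (Ne.symm hK))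
    have hdiff := buf_succ_sub_of_hi_lt hK hlt
    exact Or.inl ⟨by omega, by omega⟩
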